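/- Let Σ be a finite totally ordered alphabet and let w_1 ≻ w_2 ≻ ⋯ ≻ w_q be q distinct words over Σ, all of the same length N, strictly decreasing in the lexicographic order. Let u_1, …, u_q be words over Σ such that w_i is a prefix of u_i for each i ∈ {1, …, q}. Then for every non-identity permutation σ of {1, …, q} one has u_1 u_2 ⋯ u_q ≻ u_{σ(1)} u_{σ(2)} ⋯ u_{σ(q)} in the degree-lexicographic order. -/

import Mathlib

/-! At the first position `i` moved by `τ` one has `i < τ i`, so the two concatenations share the
prefix `u_1 ⋯ u_{i-1}` and then continue with `u_{τ i}` and `u_i`. These begin with the words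
`w_{τ i} ≺ w_i` of the same length, and a strict lexicographic comparison between words of equal
length survives appending arbitrary suffixes. -/

/-- Degree-lexicographic order on words: compare first by length, then lexicographically. -/
def DegLexLT {α : Type*} [LinearOrder α] (v w : List α) : Prop :=
  v.length < w.length ∨ (v.length = w.length ∧ List.Lex (· < ·) v w)

/-- `w` is strongly `q`-decomposable: `w = w_1 ⋯ w_q` with all `w_i` nonempty,
`w ≻ w_{σ(1)} ⋯ w_{σ(q)}` in degree-lex order for every non-identity permutation `σ`,
and `(q - 1) * length(w_i) < length(w)` for every `i`. -/
def IsStronglyQDecomp {α : Type*} [LinearOrder α] (q : ℕ) (w : List α) : Prop :=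
  ∃ f : Fin q → List α, (∀ i, f i ≠ []) ∧ w = (List.ofFn f).flatten ∧
    (∀ σ : Equiv.Perm (Fin q), σ ≠ 1 → DegLexLT ((List.ofFn (f ∘ ⇑σ)).flatten) w) ∧
    ∀ i, (q - 1) * (f i).length < w.length

namespace List

variable {α : Type*} {r : α → α → Prop}

theorem Lex.append_of_length_eq {x y : List α} (h : Lex r x y) (hlen : x.length = y.length)
    (a b : List α) : Lex r (x ++ a) (y ++ b) := by
  induction h with
  | nil => simp at hlen
  | cons _ ih => exact .cons (ih (by simpa using hlen))
  | rel h => exact .rel h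

theorem Lex.append_of_isPrefix {w₁ w₂ u₁ u₂ : List α} (h : Lex r w₁ w₂)
    (hlen : w₁.length = w₂.length) (h₁ : w₁ <+: u₁) (h₂ : w₂ <+: u₂) (a b : List α) :
    Lex r (u₁ ++ a) (u₂ ++ b) := by
  obtain ⟨s₁, rfl⟩ := h₁
  obtain ⟨s₂, rfl⟩ := h₂
  simpa only [append_assoc] using h.append_of_length_eq hlen _ _

theorem lex_flatten_ofFn_of_eq_of_lt {n : ℕ} {f g : Fin n → List α} (i : Fin n)
    (heq : ∀ j < i, f j = g j) (h : ∀ a b, Lex r (f i ++ a) (g i ++ b)) :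
    Lex r (ofFn f).flatten (ofFn g).flatten := by
  induction n with
  | zero => exact i.elim0
  | succ n ih =>
    simp only [ofFn_succ, flatten_cons]
    induction i using Fin.cases with
    | zero => exact h _ _
    | succ i =>
      rw [heq 0 i.succ_pos]
      exact (ih i (fun j hj => heq j.succ (Fin.succ_lt_succ_iff.mpr hj)) h).append_left _ _

end List

theorem Equiv.Perm.exists_lt_apply_of_ne_one {ι : Type*} [LinearOrder ι] [WellFoundedLT ι]
    {τ : Equiv.Perm ι} (hτ : τ ≠ 1) : ∃ i, (∀ j < i, τ j = j) ∧ i < τ i := by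
  have hmoved : {i | τ i ≠ i}.Nonempty := by
    by_contra! h
    exact hτ (Equiv.ext fun i => by simpa using Set.eq_empty_iff_forall_notMem.mp h i)
  obtain ⟨i, hi, hmin⟩ := WellFounded.has_min wellFounded_lt _ hmoved
  have hfix : ∀ j < i, τ j = j := fun j hj => by
    by_contra hj'
    exact hmin j hj' hj
  refine ⟨i, hfix, lt_of_le_of_ne (not_lt.mp fun hlt => hi ?_) (Ne.symm hi)⟩
  -- `τ i < i` would make `τ i` a fixed point, so `τ (τ i) = τ i` and injectivity gives `τ i = i`.
  exact τ.injective (hfix _ hlt)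

/-- If `w_1 ≻ w_2 ≻ ⋯ ≻ w_q` are words of the same length `N`, strictly decreasing in the
lexicographic order, and `w_i` is a prefix of `u_i` for each `i`, then for every
non-identity permutation `τ` one has `u_1 ⋯ u_q ≻ u_{τ(1)} ⋯ u_{τ(q)}` in degree-lex
order. -/
theorem concat_gt_of_prefixes_lex_decreasing
    {σ : Type*} [LinearOrder σ] (q N : ℕ) (w u : Fin q → List σ)
    (hlen : ∀ i, (w i).length = N)
    (hdec : ∀ i j : Fin q, i < j → List.Lex (· < ·) (w j) (w i))
    (hpre : ∀ i, w i <+: u i) :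
    ∀ τ : Equiv.Perm (Fin q), τ ≠ 1 →
      DegLexLT ((List.ofFn (u ∘ ⇑τ)).flatten) ((List.ofFn u).flatten) := by
  intro τ hτ
  obtain ⟨i, hfix, hlt⟩ := τ.exists_lt_apply_of_ne_one hτ
  refine Or.inr ⟨((τ.ofFn_comp_perm u).flatten).length_eq, ?_⟩
  refine List.lex_flatten_ofFn_of_eq_of_lt i (fun j hj => by simp [hfix j hj]) fun a b => ?_
  exact (hdec i (τ i) hlt).append_of_isPrefix (by rw [hlen, hlen]) (hpre _) (hpre _) a b
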